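/- Let B, hatB be n x n real symmetric matrices, U, hatU in R^{n x d} with orthonormal columns, and S, hatS in R^{d x d} diagonal with positive diagonal entries, satisfying B U = U S, hatB hatU = hatU hatS, and U U^T B = B. Set hatX = hatU hatS^{1/2}. Then for every d x d matrix W*: hatX - U S^{1/2} W* = (hatB - B) U S^{-1/2} W* - (hatB - B) U (S^{-1/2} W* - W* hatS^{-1/2}) - U U^T (hatB - B) U W* hatS^{-1/2} + (I - U U^T)(hatB - B)(hatU - U W*) hatS^{-1/2} + U (U^T hatU - W*) hatS^{1/2} + U (W* hatS^{1/2} - S^{1/2} W*). -/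

import Mathlib

open MeasureTheory ProbabilityTheory Matrix Filter
open scoped ENNReal NNReal Topology

noncomputable section

namespace CMDSPaper

/-- Euclidean norm of a vector in `Fin d → ℝ`. -/
def enorm2 {d : ℕ} (v : Fin d → ℝ) : ℝ := Real.sqrt (∑ j, v j ^ 2)

/-- A real random variable is sub-Gaussian. -/
def SubGaussianRV {α : Type*} [MeasurableSpace α] (μ : Measure α) (X : α → ℝ) : Prop :=
  ∃ K > 0, ∀ t ≥ 0, μ {a | t < |X a|} ≤ ENNReal.ofReal (2 * Real.exp (-(t ^ 2 / K ^ 2)))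

/-- A probability distribution on `ℝ^d` is sub-Gaussian if all its one-dimensional
marginals are sub-Gaussian. -/
def SubGaussianMeasure {d : ℕ} (F : Measure (Fin d → ℝ)) : Prop :=
  ∀ u : Fin d → ℝ, SubGaussianRV F fun z => ∑ j, z j * u j

/-- The `n × n` double centering matrix `P = I - (1/n) 1 1ᵀ`. -/
def cent (n : ℕ) : Matrix (Fin n) (Fin n) ℝ :=
  1 - (n : ℝ)⁻¹ • Matrix.of fun _ _ => (1 : ℝ)

/-- Entrywise square of a matrix. -/
def entsq {n : ℕ} (A : Matrix (Fin n) (Fin n) ℝ) : Matrix (Fin n) (Fin n) ℝ :=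
  Matrix.of fun i j => A i j ^ 2

/-- `-(1/2) P M P` applied to an (already squared) dissimilarity matrix `M`. -/
def bmatSq {n : ℕ} (M : Matrix (Fin n) (Fin n) ℝ) : Matrix (Fin n) (Fin n) ℝ :=
  (-(1 / 2) : ℝ) • (cent n * M * cent n)

/-- Entrywise square root of a diagonal matrix. -/
def dsqrt {d : ℕ} (S : Matrix (Fin d) (Fin d) ℝ) : Matrix (Fin d) (Fin d) ℝ :=
  Matrix.diagonal fun j => Real.sqrt (S j j)

/-- Entrywise inverse square root of a diagonal matrix. -/
def dinvsqrt {d : ℕ} (S : Matrix (Fin d) (Fin d) ℝ) : Matrix (Fin d) (Fin d) ℝ :=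
  Matrix.diagonal fun j => (Real.sqrt (S j j))⁻¹

/-- `U`, `S` form a top-`d` eigendecomposition of the symmetric matrix `B`:
there is a full orthonormal eigendecomposition with eigenvalues sorted in
decreasing order such that `U` consists of the first `d` eigenvector columns
and `S` is the diagonal matrix of the `d` largest eigenvalues. -/
def IsTopdEigen {n d : ℕ} (B : Matrix (Fin n) (Fin n) ℝ)
    (U : Matrix (Fin n) (Fin d) ℝ) (S : Matrix (Fin d) (Fin d) ℝ) : Prop :=
  ∃ (h : d ≤ n) (Q : Matrix (Fin n) (Fin n) ℝ) (lam : Fin n → ℝ),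
    Qᵀ * Q = 1 ∧ B = Q * Matrix.diagonal lam * Qᵀ ∧ Antitone lam ∧
    (∀ i j, U i j = Q i (Fin.castLE h j)) ∧
    S = Matrix.diagonal fun j => lam (Fin.castLE h j)

/-- The standard Gaussian on `ℝ^d`. -/
def stdGaussian (d : ℕ) : Measure (Fin d → ℝ) :=
  Measure.pi fun _ => gaussianReal 0 1

open scoped Classical in
/-- The mean-zero Gaussian measure on `ℝ^d` with covariance matrix `S`
(junk value if `S` is not positive semidefinite). -/
def mvGaussian {d : ℕ} (S : Matrix (Fin d) (Fin d) ℝ) : Measure (Fin d → ℝ) :=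
  if h : S.PosSemidef then (stdGaussian d).map
    ((h.1.eigenvectorUnitary : Matrix (Fin d) (Fin d) ℝ) *
      diagonal (((↑) : ℝ → ℝ) ∘ (√·) ∘ h.1.eigenvalues) *
      (star h.1.eigenvectorUnitary : Matrix (Fin d) (Fin d) ℝ)).mulVec else stdGaussian d

/-- `Φ(α, S)`: the CDF at `α` of the mean-zero Gaussian on `ℝ^d` with covariance `S`. -/
def gaussPhi {d : ℕ} (S : Matrix (Fin d) (Fin d) ℝ) (α : Fin d → ℝ) : ℝ :=
  (mvGaussian S {x | ∀ j, x j ≤ α j}).toReal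

/-- Spectral (ℓ₂ operator) norm of a matrix. -/
def specNorm {m n : ℕ} (A : Matrix (Fin m) (Fin n) ℝ) : ℝ :=
  ‖LinearMap.toContinuousLinearMap (Matrix.toEuclideanLin A)‖

/-- Frobenius norm of a matrix. -/
def frobNorm {m n : ℕ} (A : Matrix (Fin m) (Fin n) ℝ) : ℝ :=
  Real.sqrt (∑ i, ∑ j, A i j ^ 2)

/-- The sub-exponential Orlicz (ψ₁) norm of a real random variable. -/
def psi1Norm {α : Type*} [MeasurableSpace α] (μ : Measure α) (Y : α → ℝ) : ℝ :=
  sInf {t | 0 < t ∧ ∫ a, Real.exp (|Y a| / t) ∂μ ≤ 2}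

end CMDSPaper

/-!
The eigen-equation `hatB hatU = hatU hatS` gives `hatB hatU hatS^{-1/2} = hatU hatS^{1/2}`, and
`U Uᵀ B = B` says that `I - U Uᵀ` kills `B`; together
`(I - U Uᵀ)(hatB - B) hatU hatS^{-1/2} = (I - U Uᵀ) hatU hatS^{1/2}`. Adding `U Uᵀ hatU hatS^{1/2}`
recovers `hatX`, and the six terms of the decomposition telescope to exactly these two pieces
minus `U S^{1/2} W*`.
-/

namespace CMDSPaper

theorem diagonal_mul_dinvsqrt {d : ℕ} (v : Fin d → ℝ) :
    diagonal v * dinvsqrt (diagonal v) = dsqrt (diagonal v) := by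
  simp only [dinvsqrt, dsqrt, diagonal_mul_diagonal, diagonal_apply_eq, ← div_eq_mul_inv,
    Real.div_sqrt]

theorem mul_mul_dinvsqrt_of_mul_eq_mul_diagonal {n d : ℕ} {A : Matrix (Fin n) (Fin n) ℝ}
    {V : Matrix (Fin n) (Fin d) ℝ} {v : Fin d → ℝ} (hAV : A * V = V * diagonal v) :
    A * V * dinvsqrt (diagonal v) = V * dsqrt (diagonal v) := by
  rw [hAV, Matrix.mul_assoc, diagonal_mul_dinvsqrt]

theorem one_sub_mul_sub_mul_mul_of_mul_eq {m k l R : Type*} [Fintype m] [DecidableEq m]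
    [Fintype k] [Ring R] {P A B : Matrix m m R} {V : Matrix m k R} {D : Matrix k l R}
    {E : Matrix k l R} (hPB : P * B = B) (hAV : A * V * D = V * E) :
    (1 - P) * (A - B) * V * D = (1 - P) * V * E := by
  have hB : (1 - P) * B = 0 := by rw [Matrix.sub_mul, hPB, Matrix.one_mul, sub_self]
  rw [Matrix.mul_sub, hB, sub_zero, Matrix.mul_assoc, Matrix.mul_assoc, ← Matrix.mul_assoc A,
    hAV, Matrix.mul_assoc]

theorem cmds_decomposition_general {n d : ℕ}
    (B hatB : Matrix (Fin n) (Fin n) ℝ)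
    (U hatU : Matrix (Fin n) (Fin d) ℝ)
    (shat : Fin d → ℝ)
    (S hatS : Matrix (Fin d) (Fin d) ℝ)
    (hhatS : hatS = Matrix.diagonal shat)
    (hhatBU : hatB * hatU = hatU * hatS)
    (hUUB : U * Uᵀ * B = B)
    (hatX : Matrix (Fin n) (Fin d) ℝ) (hhatX : hatX = hatU * dsqrt hatS)
    (Wstar : Matrix (Fin d) (Fin d) ℝ) :
    hatX - U * dsqrt S * Wstar =
        (hatB - B) * U * dinvsqrt S * Wstar
      - (hatB - B) * U * (dinvsqrt S * Wstar - Wstar * dinvsqrt hatS)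
      - U * Uᵀ * (hatB - B) * U * Wstar * dinvsqrt hatS
      + (1 - U * Uᵀ) * (hatB - B) * (hatU - U * Wstar) * dinvsqrt hatS
      + U * (Uᵀ * hatU - Wstar) * dsqrt hatS
      + U * (Wstar * dsqrt hatS - dsqrt S * Wstar) := by
  subst hhatS hhatX
  have hcompl := one_sub_mul_sub_mul_mul_of_mul_eq hUUB
    (mul_mul_dinvsqrt_of_mul_eq_mul_diagonal hhatBU)
  calc hatU * dsqrt (diagonal shat) - U * dsqrt S * Wstar
      = (1 - U * Uᵀ) * hatU * dsqrt (diagonal shat) + U * Uᵀ * hatU * dsqrt (diagonal shat)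
          - U * dsqrt S * Wstar := by
        rw [Matrix.sub_mul, Matrix.sub_mul, Matrix.one_mul, sub_add_cancel]
    _ = (1 - U * Uᵀ) * (hatB - B) * hatU * dinvsqrt (diagonal shat)
          + U * Uᵀ * hatU * dsqrt (diagonal shat) - U * dsqrt S * Wstar := by
        rw [hcompl]
    _ = _ := by
        simp only [Matrix.sub_mul, Matrix.mul_sub, Matrix.one_mul, Matrix.mul_assoc]
        abel

/-- Lemma 5 of the paper: decomposition of `hatX - U S^{1/2} W*`. -/
theorem cmds_decomposition {n d : ℕ}
    (B hatB : Matrix (Fin n) (Fin n) ℝ)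
    (hBsymm : Bᵀ = B) (hhatBsymm : hatBᵀ = hatB)
    (U hatU : Matrix (Fin n) (Fin d) ℝ)
    (hU : Uᵀ * U = 1) (hhatU : hatUᵀ * hatU = 1)
    (s shat : Fin d → ℝ) (hs : ∀ j, 0 < s j) (hshat : ∀ j, 0 < shat j)
    (S hatS : Matrix (Fin d) (Fin d) ℝ)
    (hS : S = Matrix.diagonal s) (hhatS : hatS = Matrix.diagonal shat)
    (hBU : B * U = U * S) (hhatBU : hatB * hatU = hatU * hatS)
    (hUUB : U * Uᵀ * B = B)
    (hatX : Matrix (Fin n) (Fin d) ℝ) (hhatX : hatX = hatU * dsqrt hatS)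
    (Wstar : Matrix (Fin d) (Fin d) ℝ) :
    hatX - U * dsqrt S * Wstar =
        (hatB - B) * U * dinvsqrt S * Wstar
      - (hatB - B) * U * (dinvsqrt S * Wstar - Wstar * dinvsqrt hatS)
      - U * Uᵀ * (hatB - B) * U * Wstar * dinvsqrt hatS
      + (1 - U * Uᵀ) * (hatB - B) * (hatU - U * Wstar) * dinvsqrt hatS
      + U * (Uᵀ * hatU - Wstar) * dsqrt hatS
      + U * (Wstar * dsqrt hatS - dsqrt S * Wstar) :=
  cmds_decomposition_general B hatB U hatU shat S hatS hhatS hhatBU hUUB hatX hhatX Wstar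

end CMDSPaper
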